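/- arXiv:2512.07243 — 2 statements merged into one kernel-verified Lean document; each statement's English description precedes it below -/
import Mathlib

section
/- Let n ≥ 1 and let x, y be binary words of length n, and let t be an integer with 0 ≤ t ≤ n. Then the following three conditions are equivalent: (1) D_t(x) ∩ D_t(y) = ∅; (2) I_t(x) ∩ I_t(y) = ∅; (3) d_ID(x, y) > 2t. -/
/-- Length of a longest common subsequence of two binary words. -/
noncomputable def lcsLen (x y : List Bool) : ℕ :=
  sSup {n | ∃ z : List Bool, z.length = n ∧ z.Sublist x ∧ z.Sublist y}

/-- The insdel distance `d_ID(x,y) = |x| + |y| - 2·LCS(x,y)`. -/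
noncomputable def dID (x y : List Bool) : ℕ :=
  x.length + y.length - 2 * lcsLen x y

/-- Number of runs (maximal blocks of consecutive equal symbols) of a binary word. -/
def runs (x : List Bool) : ℕ := (x.destutter (· ≠ ·)).length

/-- Maximum run length of a binary word: the largest `n` such that some constant
word of length `n` occurs as a block of consecutive symbols of `x`. -/
noncomputable def maxRun (x : List Bool) : ℕ :=
  sSup {n | ∃ b : Bool, (List.replicate n b).IsInfix x}

/-- `D_t(x)`: the words of length `|x| - t` that are subsequences of `x`. -/
def Dset (t : ℕ) (x : List Bool) : Set (List Bool) :=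
  {z | z.length = x.length - t ∧ z.Sublist x}

/-- `I_t(x)`: the words of length `|x| + t` that are supersequences of `x`. -/
def Iset (t : ℕ) (x : List Bool) : Set (List Bool) :=
  {z | z.length = x.length + t ∧ x.Sublist z}

/-- A systematic encoding `x ↦ (x, p(x))` with redundancy words `p x` of length `r`
is a function-correcting insdel code for `f` correcting `t` insdel errors. -/
noncomputable def IsFCIDC {k : ℕ} {S : Type*} (f : (Fin k → Bool) → S) (t r : ℕ)
    (p : (Fin k → Bool) → List Bool) : Prop :=
  (∀ x, (p x).length = r) ∧
  ∀ x y, f x ≠ f y → 2 * t < dID (List.ofFn x ++ p x) (List.ofFn y ++ p y)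

/-- The optimal redundancy `r^f_ID(k,t)`. -/
noncomputable def optRed {k : ℕ} {S : Type*} (f : (Fin k → Bool) → S) (t : ℕ) : ℕ :=
  sInf {r | ∃ p, IsFCIDC f t r p}

/-- `p` is an irregular insdel-distance code of length `r` for the matrix `I`. -/
noncomputable def IsIrregularCode {M : ℕ} (I : Fin M → Fin M → ℕ) (r : ℕ)
    (p : Fin M → List Bool) : Prop :=
  (∀ i, (p i).length = r) ∧ ∀ i j, I i j ≤ dID (p i) (p j)

/-- `N^(1)_ID(I)`: least length of an irregular insdel-distance code for `I`. -/
noncomputable def N1 {M : ℕ} (I : Fin M → Fin M → ℕ) : ℕ :=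
  sInf {r | ∃ p, IsIrregularCode I r p}

/-- `N^(2)_ID(I; K)`: least length `r ≥ K` of an irregular insdel-distance code for `I`. -/
noncomputable def N2 {M : ℕ} (I : Fin M → Fin M → ℕ) (K : ℕ) : ℕ :=
  sInf {r | K ≤ r ∧ ∃ p, IsIrregularCode I r p}

-- The insdel distance matrix `I_f^(1)(t, x₁, …, x_M)`.
open Classical in
noncomputable def Imat1 {k M : ℕ} {S : Type*} (f : (Fin k → Bool) → S) (t : ℕ)
    (x : Fin M → Fin k → Bool) : Fin M → Fin M → ℕ :=
  fun i j => if f (x i) ≠ f (x j) then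
    2 * t + 2 - dID (List.ofFn (x i)) (List.ofFn (x j)) else 0

-- The insdel distance matrix `I_f^(2)(t, x₁, …, x_M)`.
open Classical in
noncomputable def Imat2 {k M : ℕ} {S : Type*} (f : (Fin k → Bool) → S) (t : ℕ)
    (x : Fin M → Fin k → Bool) : Fin M → Fin M → ℕ :=
  fun i j => if f (x i) ≠ f (x j) then
    2 * t + 2 + 2 * k - dID (List.ofFn (x i)) (List.ofFn (x j)) else 0

/-- The function distance `d^f_ID(a,b)`. -/
noncomputable def dfID {k : ℕ} {S : Type*} (f : (Fin k → Bool) → S) (a b : S) : ℕ :=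
  sInf {d | ∃ x y : Fin k → Bool, f x = a ∧ f y = b ∧ dID (List.ofFn x) (List.ofFn y) = d}

/-- The function distance matrix `I_f^(2)(t, f₁, …, f_E)`, with entries
`max(2(t+1+k) − d^f_ID(f_i, f_j), 0)` off the diagonal and `0` on the diagonal. -/
noncomputable def funMat2 {k E : ℕ} {S : Type*} (f : (Fin k → Bool) → S) (t : ℕ)
    (fs : Fin E → S) : Fin E → Fin E → ℕ :=
  fun i j => if i = j then 0 else 2 * (t + 1 + k) - dfID f (fs i) (fs j)

/-- The uniform `M × M` matrix with off-diagonal entries `d` and zero diagonal. -/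
def uniMat (M d : ℕ) : Fin M → Fin M → ℕ := fun i j => if i = j then 0 else d

/-- The number-of-runs function on `F_2^k`. -/
def runsFn (k : ℕ) (x : Fin k → Bool) : ℕ := runs (List.ofFn x)

/-- The VT-syndrome function `f(x) = Σ_{j=1}^k j·x_j mod (k+1)`. -/
def vtFn (k : ℕ) (x : Fin k → Bool) : ℕ :=
  (∑ j : Fin k, ((j : ℕ) + 1) * (if x j then 1 else 0)) % (k + 1)

/-- The function ball `B^f_ID(u, ρ) = f(B_ID(u, ρ))`. -/
def fball {k : ℕ} {S : Type*} (f : (Fin k → Bool) → S) (u : Fin k → Bool) (ρ : ℕ) : Set S :=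
  f '' {v : Fin k → Bool | dID (List.ofFn u) (List.ofFn v) ≤ ρ}

/-- `V_ID(r, d)`: the maximum size of an insdel ball of (integer) radius `d`
among centers in `F_2^r`. -/
noncomputable def Vid (r : ℕ) (d : ℤ) : ℕ :=
  sSup (Set.range fun x : Fin r → Bool =>
    Nat.card {y : Fin r → Bool | (dID (List.ofFn x) (List.ofFn y) : ℤ) ≤ d})

/-!
Both intersections are nonempty exactly when `LCS(x, y) ≥ n - t`, which is the negation of
`d_ID(x, y) > 2t`. A common subsequence of length `≥ n - t` truncates to an element of
`D_t(x) ∩ D_t(y)`. Merging `x` and `y` along a longest common subsequence gives a common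
supersequence of length `2n - LCS(x, y) ≤ n + t`, which can be padded to an element of
`I_t(x) ∩ I_t(y)`. Conversely, inside a common supersequence `z` the letters shared by `x`
and `y` form a common subsequence of length `≥ 2n - |z|`.
-/

section Sublist

variable {α : Type*}

theorem List.exists_eq_append_cons_of_cons_sublist {a : α} {w x : List α}
    (h : (a :: w).Sublist x) : ∃ x₁ x₂, x = x₁ ++ a :: x₂ ∧ w.Sublist x₂ := by
  obtain ⟨r₁, r₂, rfl, ha, hw⟩ := List.cons_sublist_iff.1 h
  obtain ⟨s, t, rfl⟩ := List.append_of_mem ha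
  exact ⟨s, t ++ r₂, by simp, hw.trans (List.sublist_append_right t r₂)⟩

theorem List.exists_common_supersequence {w : List α} :
    ∀ {x y : List α}, w.Sublist x → w.Sublist y →
      ∃ z : List α, x.Sublist z ∧ y.Sublist z ∧ z.length + w.length = x.length + y.length := by
  induction w with
  | nil =>
    intro x y _ _
    exact ⟨x ++ y, List.sublist_append_left x y, List.sublist_append_right x y, by simp⟩
  | cons a w ih =>
    intro x y hx hy
    obtain ⟨x₁, x₂, rfl, hwx₂⟩ := List.exists_eq_append_cons_of_cons_sublist hx
    obtain ⟨y₁, y₂, rfl, hwy₂⟩ := List.exists_eq_append_cons_of_cons_sublist hy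
    obtain ⟨z, hx₂z, hy₂z, hlen⟩ := ih hwx₂ hwy₂
    refine ⟨x₁ ++ y₁ ++ a :: z, ?_, ?_, ?_⟩
    · rw [List.append_assoc]
      exact (List.Sublist.refl x₁).append
        ((hx₂z.cons_cons a).trans (List.sublist_append_right y₁ _))
    · rw [List.append_assoc]
      exact ((List.Sublist.refl y₁).append (hy₂z.cons_cons a)).trans
        (List.sublist_append_right x₁ _)
    · simp only [List.length_append, List.length_cons]
      omega

theorem List.exists_common_sublist_of_sublist {z : List α} :
    ∀ {x y : List α}, x.Sublist z → y.Sublist z →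
      ∃ w : List α, w.Sublist x ∧ w.Sublist y ∧ x.length + y.length ≤ z.length + w.length := by
  induction z with
  | nil =>
    intro x y hx hy
    rw [List.sublist_nil] at hx hy
    subst hx hy
    exact ⟨[], List.Sublist.refl _, List.Sublist.refl _, by simp⟩
  | cons c z ih =>
    intro x y hx hy
    rcases List.sublist_cons_iff.1 hx with hxz | ⟨x, rfl, hxz⟩ <;>
      rcases List.sublist_cons_iff.1 hy with hyz | ⟨y, rfl, hyz⟩ <;>
      obtain ⟨w, hwx, hwy, hlen⟩ := ih hxz hyz
    · exact ⟨w, hwx, hwy, by simp only [List.length_cons]; omega⟩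
    · exact ⟨w, hwx, hwy.trans (List.sublist_cons_self c y), by simp only [List.length_cons]; omega⟩
    · exact ⟨w, hwx.trans (List.sublist_cons_self c x), hwy, by simp only [List.length_cons]; omega⟩
    · exact ⟨c :: w, hwx.cons_cons c, hwy.cons_cons c, by simp only [List.length_cons]; omega⟩

end Sublist

theorem bddAbove_lcsLen_set (x y : List Bool) :
    BddAbove {n | ∃ z : List Bool, z.length = n ∧ z.Sublist x ∧ z.Sublist y} :=
  ⟨x.length, by rintro n ⟨z, rfl, hzx, -⟩; exact hzx.length_le⟩

theorem exists_common_sublist_length_eq_lcsLen (x y : List Bool) :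
    ∃ z : List Bool, z.length = lcsLen x y ∧ z.Sublist x ∧ z.Sublist y :=
  Nat.sSup_mem (s := {n | ∃ z : List Bool, z.length = n ∧ z.Sublist x ∧ z.Sublist y})
    ⟨0, [], rfl, List.nil_sublist _, List.nil_sublist _⟩ (bddAbove_lcsLen_set x y)

theorem length_le_lcsLen {x y z : List Bool} (hzx : z.Sublist x) (hzy : z.Sublist y) :
    z.length ≤ lcsLen x y :=
  le_csSup (bddAbove_lcsLen_set x y) ⟨z, rfl, hzx, hzy⟩

theorem lcsLen_le_length_left (x y : List Bool) : lcsLen x y ≤ x.length := by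
  obtain ⟨z, hz, hzx, -⟩ := exists_common_sublist_length_eq_lcsLen x y
  exact hz ▸ hzx.length_le

theorem two_mul_lt_dID_iff {x y : List Bool} (hxy : x.length = y.length) (t : ℕ) :
    2 * t < dID x y ↔ lcsLen x y < x.length - t := by
  have := lcsLen_le_length_left x y
  unfold dID
  omega

theorem Dset_inter_nonempty_iff {x y : List Bool} (hxy : x.length = y.length) (t : ℕ) :
    (Dset t x ∩ Dset t y).Nonempty ↔ x.length - t ≤ lcsLen x y := by
  constructor
  · rintro ⟨z, ⟨hz, hzx⟩, -, hzy⟩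
    exact hz ▸ length_le_lcsLen hzx hzy
  · intro h
    obtain ⟨z, hz, hzx, hzy⟩ := exists_common_sublist_length_eq_lcsLen x y
    have hlen : (z.take (x.length - t)).length = x.length - t := by
      rw [List.length_take, hz]
      omega
    exact ⟨z.take (x.length - t), ⟨hlen, (z.take_sublist _).trans hzx⟩,
      ⟨hxy ▸ hlen, (z.take_sublist _).trans hzy⟩⟩

theorem Iset_inter_nonempty_iff {x y : List Bool} (hxy : x.length = y.length) (t : ℕ) :
    (Iset t x ∩ Iset t y).Nonempty ↔ x.length - t ≤ lcsLen x y := by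
  constructor
  · rintro ⟨z, ⟨hz, hxz⟩, -, hyz⟩
    obtain ⟨w, hwx, hwy, hlen⟩ := List.exists_common_sublist_of_sublist hxz hyz
    have := length_le_lcsLen hwx hwy
    omega
  · intro h
    obtain ⟨w, hw, hwx, hwy⟩ := exists_common_sublist_length_eq_lcsLen x y
    obtain ⟨z, hxz, hyz, hlen⟩ := List.exists_common_supersequence hwx hwy
    set z' := z ++ List.replicate (x.length + t - z.length) true
    have hz' : z'.length = x.length + t := by
      simp only [z', List.length_append, List.length_replicate]
      omega
    exact ⟨z', ⟨hz', hxz.trans (List.sublist_append_left _ _)⟩,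
      ⟨hxy ▸ hz', hyz.trans (List.sublist_append_left _ _)⟩⟩

theorem stmt0_general (n t : ℕ) (x y : List Bool)
    (hx : x.length = n) (hy : y.length = n) :
    (Dset t x ∩ Dset t y = ∅ ↔ Iset t x ∩ Iset t y = ∅) ∧
    (Dset t x ∩ Dset t y = ∅ ↔ 2 * t < dID x y) := by
  have hxy : x.length = y.length := hx.trans hy.symm
  simp only [← Set.not_nonempty_iff_eq_empty, Dset_inter_nonempty_iff hxy,
    Iset_inter_nonempty_iff hxy, two_mul_lt_dID_iff hxy, not_le, and_self]

theorem stmt0 (n t : ℕ) (hn : 1 ≤ n) (ht : t ≤ n) (x y : List Bool)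
    (hx : x.length = n) (hy : y.length = n) :
    (Dset t x ∩ Dset t y = ∅ ↔ Iset t x ∩ Iset t y = ∅) ∧
    (Dset t x ∩ Dset t y = ∅ ↔ 2 * t < dID x y) :=
  stmt0_general n t x y hx hy
end

section
/- Let f : F_2^k → {0, 1, …, k} be the VT-syndrome function f(x) = Σ_{j=1}^{k} j·x_j mod (k+1), and let t ≥ 1. Then N^(1)_ID(k+1, 2t) ≤ r^f_ID(k, t) ≤ N^(2)_ID(k+1, 2(t+k); k). -/
namespace Helper

lemma lcs_bdd (x y : List Bool) :
    BddAbove {n | ∃ z : List Bool, z.length = n ∧ z.Sublist x ∧ z.Sublist y} :=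
  ⟨x.length, fun _ ⟨z, h1, h2, _⟩ => h1 ▸ h2.length_le⟩

lemma lcs_ne (x y : List Bool) :
    Set.Nonempty {n | ∃ z : List Bool, z.length = n ∧ z.Sublist x ∧ z.Sublist y} :=
  ⟨0, [], rfl, List.nil_sublist x, List.nil_sublist y⟩

lemma le_lcs {x y z : List Bool} (h1 : z.Sublist x) (h2 : z.Sublist y) :
    z.length ≤ lcsLen x y :=
  le_csSup (lcs_bdd x y) ⟨z, rfl, h1, h2⟩

lemma lcs_le {x y : List Bool} {n : ℕ}
    (h : ∀ z : List Bool, z.Sublist x → z.Sublist y → z.length ≤ n) :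
    lcsLen x y ≤ n :=
  csSup_le (lcs_ne x y) (fun _ ⟨z, hz, h1, h2⟩ => hz ▸ h z h1 h2)

lemma lcs_le_left (x y : List Bool) : lcsLen x y ≤ x.length :=
  lcs_le fun _ h _ => h.length_le

lemma lcs_le_right (x y : List Bool) : lcsLen x y ≤ y.length :=
  lcs_le fun _ _ h => h.length_le

lemma exists_lcs (x y : List Bool) :
    ∃ z : List Bool, z.length = lcsLen x y ∧ z.Sublist x ∧ z.Sublist y :=
  Nat.sSup_mem (lcs_ne x y) (lcs_bdd x y)

lemma lcs_superadd (u v p q : List Bool) :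
    lcsLen u v + lcsLen p q ≤ lcsLen (u ++ p) (v ++ q) := by
  obtain ⟨z1, hz1, hz1u, hz1v⟩ := exists_lcs u v
  obtain ⟨z2, hz2, hz2p, hz2q⟩ := exists_lcs p q
  have := le_lcs (hz1u.append hz2p) (hz1v.append hz2q)
  simpa [List.length_append, hz1, hz2] using this

lemma drop_sublist_of_append {z a p : List Bool} (hz : z.Sublist (a ++ p)) :
    (z.drop a.length).Sublist p := by
  obtain ⟨z1, z2, rfl, h1, h2⟩ := List.sublist_append_iff.mp hz
  have hl : z1.length ≤ a.length := h1.length_le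
  have he : (z1 ++ z2).drop a.length = z2.drop (a.length - z1.length) := by
    rw [List.drop_append, List.drop_eq_nil_of_le hl, List.nil_append]
  rw [he]
  exact (List.drop_sublist _ _).trans h2

lemma lcs_concat_le {a b p q : List Bool} {k : ℕ} (ha : a.length = k) (hb : b.length = k) :
    lcsLen (a ++ p) (b ++ q) ≤ k + lcsLen p q := by
  refine lcs_le fun z h1 h2 => ?_
  have d1 : (z.drop k).Sublist p := by rw [← ha]; exact drop_sublist_of_append h1
  have d2 : (z.drop k).Sublist q := by rw [← hb]; exact drop_sublist_of_append h2
  have := le_lcs d1 d2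
  rw [List.length_drop] at this
  omega

lemma bool_len (l : List Bool) : l.length = l.count true + l.count false := by
  induction l with
  | nil => simp
  | cons a l ih =>
    rw [List.length_cons, List.count_cons, List.count_cons, ih]
    cases a <;> simp <;> omega

lemma count_true_ofFn_le_one {n : ℕ} (f : Fin n → Bool)
    (h : ∀ a b, f a = true → f b = true → a = b) : (List.ofFn f).count true ≤ 1 := by
  induction n with
  | zero => simp
  | succ n ih =>
    rw [List.ofFn_succ]
    rcases hf0 : f 0 with _ | _
    · have := ih (fun i => f i.succ) (fun a b ha hb => by
        have := h a.succ b.succ ha hb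
        exact Fin.succ_inj.mp this)
      rw [List.count_cons]
      simpa using this
    · have htail : (fun i : Fin n => f i.succ) = fun _ => false := by
        funext i
        rcases hfi : f i.succ with _ | _
        · rfl
        · exact absurd (h i.succ 0 hfi hf0) (Fin.succ_ne_zero i)
      rw [htail, List.ofFn_const, List.count_cons, List.count_replicate]
      simp

end Helper


namespace Helper

/-- block word `1^a 0^(r-a)` -/
def blk (r a : ℕ) : List Bool := List.replicate a true ++ List.replicate (r - a) false

lemma blk_len {r a : ℕ} (ha : a ≤ r) : (blk r a).length = r := by
  simp [blk]; omega

lemma count_true_blk (r a : ℕ) : (blk r a).count true = a := by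
  simp [blk, List.count_append, List.count_replicate]

lemma count_false_blk (r a : ℕ) : (blk r a).count false = r - a := by
  simp [blk, List.count_append, List.count_replicate]

lemma lcs_blk_le (r a b : ℕ) :
    lcsLen (blk r a) (blk r b) ≤ min a b + (r - max a b) := by
  refine lcs_le fun z h1 h2 => ?_
  have c1 := h1.count_le true
  have c2 := h2.count_le true
  have c3 := h1.count_le false
  have c4 := h2.count_le false
  rw [count_true_blk] at c1 c2
  rw [count_false_blk] at c3 c4
  have hz := bool_len z
  omega

/-- The family of representatives: `x_0 = 0^k`, `x_i = e_{i-1}`. -/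
def xfam (k : ℕ) (i : Fin (k + 1)) : Fin k → Bool := fun m => decide ((m : ℕ) + 1 = (i : ℕ))

lemma vt_xfam (k : ℕ) (i : Fin (k + 1)) : vtFn k (xfam k i) = (i : ℕ) := by
  unfold vtFn xfam
  cases hiv : (i : ℕ) with
  | zero => simp [hiv]
  | succ m =>
    have hm : m < k := by have := i.isLt; omega
    have hsum : (∑ j : Fin k, ((j : ℕ) + 1) *
        (if (decide ((j : ℕ) + 1 = m + 1)) = true then 1 else 0)) = m + 1 := by
      calc (∑ j : Fin k, ((j : ℕ) + 1) *
            (if (decide ((j : ℕ) + 1 = m + 1)) = true then 1 else 0))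
          = ∑ j : Fin k, if j = (⟨m, hm⟩ : Fin k) then ((j : ℕ) + 1) else 0 := by
            refine Finset.sum_congr rfl fun j _ => ?_
            by_cases hj : j = (⟨m, hm⟩ : Fin k)
            · subst hj; simp
            · have hne : ¬((j : ℕ) + 1 = m + 1) := by
                intro hc
                have hjm : (j : ℕ) = m := by omega
                exact hj (Fin.ext (by simp [hjm]))
              simp [hne, hj]; omega
        _ = m + 1 := by rw [Finset.sum_ite_eq']; simp
    rw [hsum]
    exact Nat.mod_eq_of_lt (by omega)

lemma count_true_xfam (k : ℕ) (i : Fin (k + 1)) :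
    (List.ofFn (xfam k i)).count true ≤ 1 := by
  refine count_true_ofFn_le_one _ fun a b ha hb => ?_
  unfold xfam at ha hb
  have ha' := of_decide_eq_true ha
  have hb' := of_decide_eq_true hb
  exact Fin.ext (by omega)

lemma lcs_xfam (k : ℕ) (i j : Fin (k + 1)) :
    k - 1 ≤ lcsLen (List.ofFn (xfam k i)) (List.ofFn (xfam k j)) := by
  have hsub : ∀ i : Fin (k + 1),
      (List.replicate (k - 1) false).Sublist (List.ofFn (xfam k i)) := by
    intro i
    rw [List.replicate_sublist_iff]
    have h1 := count_true_xfam k i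
    have h2 := bool_len (List.ofFn (xfam k i))
    rw [List.length_ofFn] at h2
    omega
  have := le_lcs (hsub i) (hsub j)
  simpa using this

end Helper


theorem stmt12 (k t : ℕ) (ht : 1 ≤ t) :
    N1 (uniMat (k + 1) (2 * t)) ≤ optRed (vtFn k) t ∧
    optRed (vtFn k) t ≤ N2 (uniMat (k + 1) (2 * (t + k))) k := by
  classical
  set A : Set ℕ := {r | ∃ p, IsFCIDC (vtFn k) t r p} with hA
  set B : Set ℕ := {r | ∃ p, IsIrregularCode (uniMat (k + 1) (2 * t)) r p} with hB
  set C : Set ℕ := {r | k ≤ r ∧ ∃ p, IsIrregularCode (uniMat (k + 1) (2 * (t + k))) r p}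
    with hC
  -- C is nonempty
  have hCne : C.Nonempty := by
    refine ⟨k + k * (t + k), ?_, fun i => Helper.blk (k + k * (t + k)) ((i : ℕ) * (t + k)), ?_, ?_⟩
    · omega
    · intro i
      refine Helper.blk_len ?_
      have : (i : ℕ) ≤ k := by have := i.isLt; omega
      calc (i : ℕ) * (t + k) ≤ k * (t + k) := Nat.mul_le_mul_right _ this
        _ ≤ k + k * (t + k) := le_add_self
    · intro i j
      by_cases hij : i = j
      · simp [uniMat, hij]
      · rw [uniMat, if_neg hij]
        show 2 * (t + k) ≤ dID (Helper.blk (k + k * (t + k)) ((i : ℕ) * (t + k)))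
          (Helper.blk (k + k * (t + k)) ((j : ℕ) * (t + k)))
        set r0 := k + k * (t + k) with hr0
        set a := (i : ℕ) * (t + k) with ha
        set b := (j : ℕ) * (t + k) with hb
        have hik : (i : ℕ) ≤ k := by have := i.isLt; omega
        have hjk : (j : ℕ) ≤ k := by have := j.isLt; omega
        have har : a ≤ r0 := by
          calc a ≤ k * (t + k) := Nat.mul_le_mul_right _ hik
            _ ≤ r0 := le_add_self
        have hbr : b ≤ r0 := by
          calc b ≤ k * (t + k) := Nat.mul_le_mul_right _ hjk
            _ ≤ r0 := le_add_self
        have hgap : a + (t + k) ≤ b ∨ b + (t + k) ≤ a := by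
          have hne : (i : ℕ) ≠ (j : ℕ) := fun h => hij (Fin.ext h)
          rcases Nat.lt_or_ge (i : ℕ) (j : ℕ) with h | h
          · left
            have : ((i : ℕ) + 1) * (t + k) ≤ (j : ℕ) * (t + k) :=
              Nat.mul_le_mul_right _ h
            rw [Nat.add_mul, one_mul] at this
            omega
          · right
            have hlt : (j : ℕ) < (i : ℕ) := lt_of_le_of_ne h (Ne.symm hne)
            have : ((j : ℕ) + 1) * (t + k) ≤ (i : ℕ) * (t + k) :=
              Nat.mul_le_mul_right _ hlt
            rw [Nat.add_mul, one_mul] at this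
            omega
        have hlcs := Helper.lcs_blk_le r0 a b
        have hlen1 := Helper.blk_len har
        have hlen2 := Helper.blk_len hbr
        rw [dID, hlen1, hlen2]
        omega
  -- C ⊆ A : from an irregular code construct an FCIDC
  have hCA : ∀ r ∈ C, r ∈ A := by
    rintro r ⟨hrk, p, hplen, hpdist⟩
    by_cases hk0 : k = 0
    · subst hk0
      refine ⟨fun _ => p 0, fun _ => hplen 0, fun x y hxy => ?_⟩
      exact absurd (by simp [vtFn]) hxy
    refine ⟨fun x => p ⟨vtFn k x, Nat.mod_lt _ (Nat.succ_pos k)⟩,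
      fun x => hplen _, fun x y hxy => ?_⟩
    show 2 * t < dID (List.ofFn x ++ p ⟨vtFn k x, Nat.mod_lt _ (Nat.succ_pos k)⟩)
      (List.ofFn y ++ p ⟨vtFn k y, Nat.mod_lt _ (Nat.succ_pos k)⟩)
    set i : Fin (k + 1) := ⟨vtFn k x, Nat.mod_lt _ (Nat.succ_pos k)⟩ with hi
    set j : Fin (k + 1) := ⟨vtFn k y, Nat.mod_lt _ (Nat.succ_pos k)⟩ with hj
    have hij : i ≠ j := fun h => hxy (by
      have := congrArg Fin.val h
      simpa [hi, hj] using this)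
    have hd := hpdist i j
    rw [uniMat, if_neg hij] at hd
    have hlcs := Helper.lcs_concat_le (p := p i) (q := p j)
      (List.length_ofFn (f := x)) (List.length_ofFn (f := y))
    have hlp : lcsLen (p i) (p j) ≤ r := by
      have := Helper.lcs_le_left (p i) (p j)
      rw [hplen] at this; exact this
    rw [dID, hplen, hplen] at hd
    rw [dID, List.length_append, List.length_append, List.length_ofFn,
      List.length_ofFn, hplen, hplen]
    omega
  -- A ⊆ B : from an FCIDC construct an irregular code
  have hAB : A ⊆ B := by
    rintro r ⟨p, hplen, hpdist⟩
    refine ⟨fun i => p (Helper.xfam k i), fun i => hplen _, fun i j => ?_⟩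
    by_cases hij : i = j
    · simp [uniMat, hij]
    · rw [uniMat, if_neg hij]
      show 2 * t ≤ dID (p (Helper.xfam k i)) (p (Helper.xfam k j))
      have hne : vtFn k (Helper.xfam k i) ≠ vtFn k (Helper.xfam k j) := by
        rw [Helper.vt_xfam, Helper.vt_xfam]
        exact fun h => hij (Fin.ext h)
      have hd := hpdist _ _ hne
      have hsup := Helper.lcs_superadd (List.ofFn (Helper.xfam k i))
        (List.ofFn (Helper.xfam k j)) (p (Helper.xfam k i)) (p (Helper.xfam k j))
      have hLf : lcsLen (List.ofFn (Helper.xfam k i) ++ p (Helper.xfam k i))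
          (List.ofFn (Helper.xfam k j) ++ p (Helper.xfam k j)) ≤ k + r := by
        have := Helper.lcs_le_left (List.ofFn (Helper.xfam k i) ++ p (Helper.xfam k i))
          (List.ofFn (Helper.xfam k j) ++ p (Helper.xfam k j))
        rw [List.length_append, hplen, List.length_ofFn] at this
        exact this
      have hLx : k - 1 ≤ lcsLen (List.ofFn (Helper.xfam k i)) (List.ofFn (Helper.xfam k j)) :=
        Helper.lcs_xfam k i j
      have hLp : lcsLen (p (Helper.xfam k i)) (p (Helper.xfam k j)) ≤ r := by
        have := Helper.lcs_le_left (p (Helper.xfam k i)) (p (Helper.xfam k j))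
        rw [hplen] at this; exact this
      have hLx' : lcsLen (List.ofFn (Helper.xfam k i)) (List.ofFn (Helper.xfam k j)) ≤ k := by
        have := Helper.lcs_le_left (List.ofFn (Helper.xfam k i)) (List.ofFn (Helper.xfam k j))
        rw [List.length_ofFn] at this; exact this
      rw [dID, List.length_append, List.length_append, List.length_ofFn,
        List.length_ofFn, hplen, hplen] at hd
      rw [dID, hplen, hplen]
      omega
  have hAne : A.Nonempty := ⟨hCne.choose, hCA _ hCne.choose_spec⟩
  constructor
  · exact Nat.sInf_le (hAB (Nat.sInf_mem hAne))
  · exact Nat.sInf_le (hCA _ (Nat.sInf_mem hCne))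
end
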